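/- Let p > 3 be a prime, and let m and v be positive integers with gcd(m, v) = 1 and m·v² ≤ 4·√p. Suppose s is an integer with s² ≡ 4p (mod v²). Then there exists an integer t with |t| ≤ 2·√p such that m divides p + 1 − t and v² divides t² − 4p. -/

import Mathlib

/-!
By the Chinese remainder theorem there is an integer `t₀` with `t₀ ≡ p + 1 (mod m)`
and `t₀ ≡ s (mod v²)`, and every `t ≡ t₀ (mod m v²)` keeps both congruences, the second one giving
`t² ≡ s² ≡ 4p (mod v²)`. A half-open interval `[-2√p, -2√p + m v²)` contains a full residue
system modulo `m v²`, and it lies inside `[-2√p, 2√p]` because `m v² ≤ 4√p`.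
-/

theorem IsCoprime.exists_dvd_sub_and_dvd_sub {R : Type*} [CommRing R] {m n : R}
    (h : IsCoprime m n) (a b : R) : ∃ x, m ∣ a - x ∧ n ∣ b - x := by
  obtain ⟨u, w, huw⟩ := h
  exact ⟨a * (w * n) + b * (u * m), ⟨u * (a - b), by linear_combination -a * huw⟩,
    ⟨w * (b - a), by linear_combination -b * huw⟩⟩

theorem Int.exists_modEq_and_mem_Ico {α : Type*} [Field α] [LinearOrder α]
    [IsStrictOrderedRing α] [FloorRing α] {n : ℤ} (hn : 0 < n) (x : ℤ) (a : α) :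
    ∃ t : ℤ, t ≡ x [ZMOD n] ∧ a ≤ t ∧ (t : α) < a + n := by
  set c := ⌈a⌉
  refine ⟨c + (x - c) % n, by simpa using (Int.mod_modEq (x - c) n).add_left c, ?_, ?_⟩
  · have : c ≤ c + (x - c) % n := le_add_of_nonneg_right (Int.emod_nonneg _ hn.ne')
    exact (Int.le_ceil a).trans (by exact_mod_cast this)
  · have hle : c + (x - c) % n ≤ c + n - 1 := by linarith [Int.emod_lt_of_pos (x - c) hn]
    calc ((c + (x - c) % n : ℤ) : α) ≤ c + n - 1 := by exact_mod_cast hle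
      _ < a + n := by linarith [Int.ceil_lt_add_one a]

theorem exists_trace_with_congruences_general (p : ℕ)
    (m v : ℕ) (hm : 0 < m) (hv : 0 < v) (hcop : Nat.gcd m v = 1)
    (hmv : ((m : ℝ) * (v : ℝ) ^ 2) ≤ 4 * Real.sqrt p)
    (s : ℤ) (hs : s ^ 2 ≡ 4 * (p : ℤ) [ZMOD ((v : ℤ) ^ 2)]) :
    ∃ t : ℤ, |(t : ℝ)| ≤ 2 * Real.sqrt p ∧
      (m : ℤ) ∣ ((p : ℤ) + 1 - t) ∧ ((v : ℤ) ^ 2) ∣ (t ^ 2 - 4 * (p : ℤ)) := by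
  have hcop' : IsCoprime (m : ℤ) ((v : ℤ) ^ 2) := (Nat.isCoprime_iff_coprime.2 hcop).pow_right
  obtain ⟨t₀, hmt₀, hvt₀⟩ := hcop'.exists_dvd_sub_and_dvd_sub ((p : ℤ) + 1) s
  obtain ⟨t, ht, hlo, hhi⟩ :=
    Int.exists_modEq_and_mem_Ico (n := (m : ℤ) * (v : ℤ) ^ 2) (by positivity) t₀ (-(2 * √p))
  refine ⟨t, abs_le.2 ⟨hlo, by push_cast at hhi; linarith⟩, ?_, ?_⟩
  · simpa using dvd_add hmt₀ (ht.of_mul_right _).dvd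
  · have hts : t ≡ s [ZMOD (v : ℤ) ^ 2] := (ht.of_mul_left _).trans (Int.modEq_iff_dvd.2 hvt₀)
    exact ((hts.pow 2).trans hs).symm.dvd

/-- Let `p > 3` be prime, and let `m`, `v` be positive integers with
`gcd(m, v) = 1` and `m·v² ≤ 4·√p`. If `s` is an integer with `s² ≡ 4p (mod v²)`, then there
is an integer `t` with `|t| ≤ 2·√p` such that `m ∣ p + 1 − t` and `v² ∣ t² − 4p`. -/
theorem exists_trace_with_congruences (p : ℕ) (hp : p.Prime) (hp3 : 3 < p)
    (m v : ℕ) (hm : 0 < m) (hv : 0 < v) (hcop : Nat.gcd m v = 1)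
    (hmv : ((m : ℝ) * (v : ℝ) ^ 2) ≤ 4 * Real.sqrt p)
    (s : ℤ) (hs : s ^ 2 ≡ 4 * (p : ℤ) [ZMOD ((v : ℤ) ^ 2)]) :
    ∃ t : ℤ, |(t : ℝ)| ≤ 2 * Real.sqrt p ∧
      (m : ℤ) ∣ ((p : ℤ) + 1 - t) ∧ ((v : ℤ) ^ 2) ∣ (t ^ 2 - 4 * (p : ℤ)) :=
  exists_trace_with_congruences_general p m v hm hv hcop hmv s hs
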